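/- arXiv:1301.5034 — 5 statements merged into one kernel-verified Lean document; each statement's English description precedes it below -/
import Mathlib

section
/- Let k and m be positive integers, and let X ~ Gamma(k,1) and Y ~ Gamma(m,1) be independent random variables. Then for every z ≥ 0, P(X/Y ≤ z) = 1 - Σ_{i=0}^{k-1} [ (m+i-1)! / ((m-1)! · i!) ] · z^i / (1+z)^{m+i}. -/
/-!
Conditioning on `Y`, `P(X/Y > z) = ∫ P(X > z y) dΓ_m(y)`. For an integer shape the Gamma tail
is a Poisson sum, `P(X > t) = ∑_{i<k} e^{-t} t^i / i!` (the antiderivative of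
`e^{-x} x^{k-1}/(k-1)!` telescopes). Against the `Gamma(m,1)` density each term
`e^{-zy} (zy)^i / i!` is a multiple of the `Gamma(m+i, 1+z)` density, so its integral is read off
from the normalising constants.
-/

open MeasureTheory ProbabilityTheory Real Set Filter Finset Nat Topology

lemma Real.Gamma_natCast_of_pos {n : ℕ} (hn : 0 < n) : Gamma n = (n - 1)! := by
  obtain ⟨n, rfl⟩ := Nat.exists_eq_add_one_of_ne_zero hn.ne'
  simpa using Gamma_nat_eq_factorial n

lemma measurable_gammaPDF (a r : ℝ) : Measurable (gammaPDF a r) :=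
  (measurable_gammaPDFReal a r).ennreal_ofReal

lemma ae_pos_gammaMeasure (a r : ℝ) : ∀ᵐ y ∂gammaMeasure a r, 0 < y := by
  simp only [ae_iff, not_lt]
  change gammaMeasure a r (Iic 0) = 0
  rw [gammaMeasure, withDensity_apply _ measurableSet_Iic,
    setLIntegral_congr Iio_ae_eq_Iic.symm, lintegral_gammaPDF_of_nonpos le_rfl]

lemma gammaPDFReal_mul_pow_mul_exp_neg_mul {a r s y : ℝ} (ha : 0 < a) (hrs : 0 < r + s)
    (hy : 0 < y) (i : ℕ) :
    gammaPDFReal a r y * (y ^ i * exp (-(s * y))) =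
      r ^ a * Gamma (a + i) / (Gamma a * (r + s) ^ (a + i)) * gammaPDFReal (a + i) (r + s) y := by
  have hΓ : Gamma (a + i) ≠ 0 := (Gamma_pos_of_pos (by positivity)).ne'
  have hrs' : (r + s) ^ (a + i) ≠ 0 := (rpow_pos_of_pos hrs _).ne'
  rw [gammaPDFReal, gammaPDFReal, if_pos hy.le, if_pos hy.le, add_sub_right_comm,
    rpow_add hy, rpow_natCast, add_mul, neg_add, exp_add]
  field_simp

lemma lintegral_pow_mul_exp_neg_mul_gammaMeasure {a r s : ℝ} (ha : 0 < a) (hr : 0 < r)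
    (hrs : 0 < r + s) (i : ℕ) :
    ∫⁻ y, ENNReal.ofReal (y ^ i * exp (-(s * y))) ∂gammaMeasure a r =
      ENNReal.ofReal (r ^ a * Gamma (a + i) / (Gamma a * (r + s) ^ (a + i))) := by
  rw [gammaMeasure, lintegral_withDensity_eq_lintegral_mul _ (measurable_gammaPDF a r)
    (by fun_prop)]
  calc ∫⁻ y, (gammaPDF a r * fun y ↦ ENNReal.ofReal (y ^ i * exp (-(s * y)))) y
      = ∫⁻ y, ENNReal.ofReal (r ^ a * Gamma (a + i) / (Gamma a * (r + s) ^ (a + i))) *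
          gammaPDF (a + i) (r + s) y := by
        refine lintegral_congr_ae ?_
        filter_upwards [measure_eq_zero_iff_ae_notMem.1 (measure_singleton (0 : ℝ))] with y hy0
        rcases lt_or_gt_of_ne (show y ≠ 0 from hy0) with hy | hy
        · simp [gammaPDF_of_neg hy]
        · rw [Pi.mul_apply, gammaPDF, gammaPDF,
            ← ENNReal.ofReal_mul (gammaPDFReal_nonneg ha hr y),
            ← ENNReal.ofReal_mul (by positivity [(Gamma_pos_of_pos ha).le]),
            gammaPDFReal_mul_pow_mul_exp_neg_mul ha hrs hy]
    _ = _ := by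
        rw [lintegral_const_mul _ (measurable_gammaPDF _ _),
          lintegral_gammaPDF_eq_one (by positivity) hrs, mul_one]

lemma hasDerivAt_neg_sum_exp_neg_mul_pow_div_factorial (n : ℕ) (x : ℝ) :
    HasDerivAt (fun x ↦ -∑ i ∈ range (n + 1), exp (-x) * x ^ i / (i)!)
      (exp (-x) * x ^ n / (n)!) x := by
  induction n with
  | zero => simpa [Pi.neg_def] using (hasDerivAt_neg x).exp.neg
  | succ n ih =>
    have hterm : HasDerivAt (fun x ↦ exp (-x) * x ^ (n + 1) / (n + 1)!)
        (exp (-x) * x ^ n / (n)! - exp (-x) * x ^ (n + 1) / (n + 1)!) x := by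
      refine (((hasDerivAt_neg x).exp.mul (hasDerivAt_pow (n + 1) x)).div_const
        ((n + 1)! : ℝ)).congr_deriv ?_
      rw [Nat.factorial_succ]
      push_cast
      field_simp
      ring
    refine ((ih.fun_sub hterm).congr_deriv (by ring)).congr_of_eventuallyEq
      (Eventually.of_forall fun y ↦ ?_)
    simp only [sum_range_succ]
    ring

lemma gammaPDFReal_natCast_one {k : ℕ} (hk : 0 < k) {x : ℝ} (hx : 0 ≤ x) :
    gammaPDFReal k 1 x = exp (-x) * x ^ (k - 1) / (k - 1)! := by
  rw [gammaPDFReal, if_pos hx, one_rpow, one_mul, Gamma_natCast_of_pos hk,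
    ← Nat.cast_pred hk, rpow_natCast]
  ring

lemma gammaMeasure_natCast_one_Ioi {k : ℕ} (hk : 0 < k) {t : ℝ} (ht : 0 ≤ t) :
    gammaMeasure k 1 (Ioi t) = ENNReal.ofReal (∑ i ∈ range k, exp (-t) * t ^ i / (i)!) := by
  obtain ⟨n, rfl⟩ : ∃ n, k = n + 1 := Nat.exists_eq_add_one_of_ne_zero hk.ne'
  set F : ℝ → ℝ := fun x ↦ -∑ i ∈ range (n + 1), exp (-x) * x ^ i / (i)!
  have hF : ∀ x ∈ Ici t, HasDerivAt F (exp (-x) * x ^ n / (n)!) x :=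
    fun x _ ↦ hasDerivAt_neg_sum_exp_neg_mul_pow_div_factorial n x
  have hF_nonneg : ∀ x ∈ Ioi t, 0 ≤ exp (-x) * x ^ n / (n)! := fun x hx ↦ by
    have : 0 ≤ x := ht.trans hx.out.le
    positivity
  have hF_tendsto : Tendsto F atTop (𝓝 0) := by
    have := tendsto_finsetSum (range (n + 1)) fun i _ ↦
      ((tendsto_pow_mul_exp_neg_atTop_nhds_zero i).div_const ((i)! : ℝ))
    simpa [F, mul_comm] using this.neg
  have hF_int := integrableOn_Ioi_deriv_of_nonneg' hF hF_nonneg hF_tendsto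
  rw [gammaMeasure, withDensity_apply _ measurableSet_Ioi,
    setLIntegral_congr_fun measurableSet_Ioi fun x hx ↦ by
      rw [gammaPDF, gammaPDFReal_natCast_one n.succ_pos (ht.trans hx.out.le), Nat.succ_sub_one],
    ← ofReal_integral_eq_lintegral_ofReal hF_int
      ((ae_restrict_iff' measurableSet_Ioi).2 (ae_of_all _ hF_nonneg)),
    integral_Ioi_of_hasDerivAt_of_nonneg' hF hF_nonneg hF_tendsto]
  simp [F]

lemma measure_lt_div_eq_lintegral_map {Ω : Type*} [MeasurableSpace Ω] {μ : Measure Ω}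
    [IsFiniteMeasure μ] {X Y : Ω → ℝ} (hX : Measurable X) (hY : Measurable Y)
    (hXY : IndepFun X Y μ) (hY_pos : ∀ᵐ ω ∂μ, 0 < Y ω) (z : ℝ) :
    μ {ω | z < X ω / Y ω} = ∫⁻ y, μ.map X (Ioi (z * y)) ∂μ.map Y := by
  have hs : MeasurableSet {p : ℝ × ℝ | z * p.2 < p.1} :=
    measurableSet_lt (measurable_snd.const_mul z) measurable_fst
  calc μ {ω | z < X ω / Y ω} = μ ((fun ω ↦ (X ω, Y ω)) ⁻¹' {p | z * p.2 < p.1}) := by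
        refine measure_congr ?_
        filter_upwards [hY_pos] with ω hω
        exact propext (lt_div_iff₀ hω)
    _ = ((μ.map X).prod (μ.map Y)) {p | z * p.2 < p.1} := by
        rw [← (indepFun_iff_map_prod_eq_prod_map_map hX.aemeasurable hY.aemeasurable).1 hXY,
          Measure.map_apply (hX.prodMk hY) hs]
    _ = ∫⁻ y, μ.map X (Ioi (z * y)) ∂μ.map Y := Measure.prod_apply_symm hs

lemma lintegral_gammaMeasure_natCast_one_Ioi_mul {k m : ℕ} (hk : 0 < k) (hm : 0 < m) {z : ℝ}
    (hz : 0 ≤ z) :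
    ∫⁻ y, gammaMeasure k 1 (Ioi (z * y)) ∂gammaMeasure m 1 =
      ENNReal.ofReal (∑ i ∈ range k,
        ((m + i - 1)! : ℝ) / ((m - 1)! * (i)!) * z ^ i / (1 + z) ^ (m + i)) := by
  have hcoef : ∀ i : ℕ,
      z ^ i / (i)! * (1 ^ (m : ℝ) * Gamma (m + i) / (Gamma m * (1 + z) ^ ((m : ℝ) + i))) =
        ((m + i - 1)! : ℝ) / ((m - 1)! * (i)!) * z ^ i / (1 + z) ^ (m + i) := fun i ↦ by
    rw [one_rpow, ← Nat.cast_add, rpow_natCast, Gamma_natCast_of_pos hm,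
      Gamma_natCast_of_pos (by omega)]
    field_simp
  calc ∫⁻ y, gammaMeasure k 1 (Ioi (z * y)) ∂gammaMeasure m 1
      = ∫⁻ y, ∑ i ∈ range k, ENNReal.ofReal (z ^ i / (i)!) *
          ENNReal.ofReal (y ^ i * exp (-(z * y))) ∂gammaMeasure m 1 := by
        refine lintegral_congr_ae ?_
        filter_upwards [ae_pos_gammaMeasure m 1] with y hy
        have hzy : 0 ≤ z * y := by positivity
        rw [gammaMeasure_natCast_one_Ioi hk hzy,
          ENNReal.ofReal_sum_of_nonneg fun i _ ↦ by positivity]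
        refine sum_congr rfl fun i _ ↦ ?_
        rw [← ENNReal.ofReal_mul (by positivity)]
        congr 1
        ring
    _ = ∑ i ∈ range k, ENNReal.ofReal (z ^ i / (i)!) * ENNReal.ofReal
          (1 ^ (m : ℝ) * Gamma (m + i) / (Gamma m * (1 + z) ^ ((m : ℝ) + i))) := by
        rw [lintegral_finsetSum _ fun i _ ↦ by fun_prop]
        refine sum_congr rfl fun i _ ↦ ?_
        rw [lintegral_const_mul _ (by fun_prop), lintegral_pow_mul_exp_neg_mul_gammaMeasure
          (Nat.cast_pos.2 hm) one_pos (by positivity)]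
    _ = _ := by
        rw [ENNReal.ofReal_sum_of_nonneg fun i _ ↦ by positivity]
        refine sum_congr rfl fun i _ ↦ ?_
        rw [← ENNReal.ofReal_mul (by positivity), hcoef]

/-- CDF of the ratio of two independent Gamma random variables with integer shapes and rate 1. -/
theorem gamma_ratio_cdf
    {Ω : Type*} [MeasurableSpace Ω] (μ : Measure Ω) [IsProbabilityMeasure μ]
    (k m : ℕ) (hk : 0 < k) (hm : 0 < m) (X Y : Ω → ℝ)
    (hX : Measurable X) (hY : Measurable Y)
    (hindep : IndepFun X Y μ)
    (hXd : Measure.map X μ = gammaMeasure k 1)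
    (hYd : Measure.map Y μ = gammaMeasure m 1) :
    ∀ z : ℝ, 0 ≤ z →
      (μ {ω | X ω / Y ω ≤ z}).toReal =
        1 - ∑ i ∈ Finset.range k,
          ((Nat.factorial (m + i - 1) : ℝ) /
            ((Nat.factorial (m - 1) : ℝ) * (Nat.factorial i : ℝ))) *
          z ^ i / (1 + z) ^ (m + i) := by
  intro z hz
  have hY_pos : ∀ᵐ ω ∂μ, 0 < Y ω :=
    ae_of_ae_map hY.aemeasurable (hYd ▸ ae_pos_gammaMeasure m 1)
  have htail : μ {ω | z < X ω / Y ω} = ENNReal.ofReal (∑ i ∈ Finset.range k,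
      ((m + i - 1)! : ℝ) / ((m - 1)! * (i)!) * z ^ i / (1 + z) ^ (m + i)) := by
    rw [measure_lt_div_eq_lintegral_map hX hY hindep hY_pos, hXd, hYd,
      lintegral_gammaMeasure_natCast_one_Ioi_mul hk hm hz]
  have hcompl : {ω | X ω / Y ω ≤ z} = {ω | z < X ω / Y ω}ᶜ := by
    ext ω
    simp
  have hmeas : MeasurableSet {ω | z < X ω / Y ω} :=
    measurableSet_lt measurable_const (hX.div hY)
  rw [← measureReal_def, hcompl, probReal_compl_eq_one_sub hmeas, measureReal_def, htail,
    ENNReal.toReal_ofReal (by positivity)]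
end

section
/- Consider the coverage setup with two parameter choices: positive integers (Δ_n, Ψ_n)_{n∈ℕ} and (Δ'_n, Ψ'_n)_{n∈ℕ}, using the same locations x_n, powers P_n and SIR targets β_n. If Δ_n ≥ Δ'_n and Ψ_n ≤ Ψ'_n for every n ∈ ℕ, then the coverage probabilities satisfy P_c(Δ, Ψ) ≥ P_c(Δ', Ψ'). -/
open MeasureTheory ProbabilityTheory ENNReal

/-- Interference at the typical user from all base stations except `n`, valued in `[0,∞]`. -/
noncomputable def interference {Ω : Type*} (P : ℕ → ℝ) (x : ℕ → EuclideanSpace ℝ (Fin 2))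
    (α : ℝ) (g : ℕ → Ω → ℝ) (n : ℕ) (ω : Ω) : ℝ≥0∞ :=
  ∑' m : ℕ, if m = n then 0 else ENNReal.ofReal (P m * g m ω * ‖x m‖ ^ (-α))

/-- SIR of base station `n` at the typical user, valued in `[0,∞]`
(it equals `0` when the interference is infinite). -/
noncomputable def SIR {Ω : Type*} (P : ℕ → ℝ) (x : ℕ → EuclideanSpace ℝ (Fin 2))
    (α : ℝ) (h g : ℕ → Ω → ℝ) (n : ℕ) (ω : Ω) : ℝ≥0∞ :=
  ENNReal.ofReal (P n * h n ω * ‖x n‖ ^ (-α)) / interference P x α g n ω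

open Real Set Function

/-!
For integer shape, the CDF of Gamma(k, 1) is `1 - e^{-x} ∑_{i<k} x^i / i!`, which decreases in
`k`. Its continuity and strict monotonicity on `[0, ∞)` make the monotone transport
`T = F_k⁻¹ ∘ F_j` push Gamma(j, 1) forward to Gamma(k, 1), and `T x ≤ x` for `x ≥ 0` when
`k ≤ j` (`T x ≥ x` when `j ≤ k`). Applying these maps coordinatewise to `(h, g)` gives an
independent family with the joint law of `(h', g')` whose direct-link gains are below `h` and
whose interfering gains are above `g`. The SIR increases in the former and decreases in the
latter, so the coverage event of the transported family lies inside that of `(h, g)`.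
-/

noncomputable def erlangCDF (k : ℕ) (x : ℝ) : ℝ :=
  1 - exp (-x) * ∑ i ∈ Finset.range k, x ^ i / i.factorial

lemma continuous_erlangCDF (k : ℕ) : Continuous (erlangCDF k) := by
  unfold erlangCDF; fun_prop

lemma erlangCDF_apply_zero {k : ℕ} (hk : 0 < k) : erlangCDF k 0 = 0 := by
  obtain ⟨m, rfl⟩ := Nat.exists_eq_add_one.2 hk
  simp [erlangCDF, Finset.sum_range_succ']

lemma hasDerivAt_erlangCDF_succ (k : ℕ) (x : ℝ) :
    HasDerivAt (erlangCDF (k + 1)) (x ^ k * exp (-x) / k.factorial) x := by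
  have hexp : HasDerivAt (fun y => exp (-y)) (-exp (-x)) x := by
    simpa using (hasDerivAt_neg x).exp
  induction k with
  | zero =>
    have h1 : erlangCDF 1 = fun y => 1 - exp (-y) := by funext y; simp [erlangCDF]
    simpa [h1] using hexp.const_sub 1
  | succ k ih =>
    have hterm : HasDerivAt (fun y => exp (-y) * (y ^ (k + 1) / (k + 1).factorial))
        (-exp (-x) * (x ^ (k + 1) / (k + 1).factorial) + exp (-x) * (x ^ k / k.factorial)) x := by
      have hpow : HasDerivAt (fun y : ℝ => y ^ (k + 1) / (k + 1).factorial)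
          (x ^ k / k.factorial) x := by
        refine ((hasDerivAt_pow (k + 1) x).div_const ((k + 1).factorial : ℝ)).congr_deriv ?_
        rw [Nat.factorial_succ, add_tsub_cancel_right]; push_cast; field_simp
      exact hexp.mul hpow
    have hsplit : erlangCDF (k + 1 + 1) =
        fun y => erlangCDF (k + 1) y - exp (-y) * (y ^ (k + 1) / (k + 1).factorial) := by
      funext y; simp only [erlangCDF, Finset.sum_range_succ _ (k + 1)]; ring
    rw [hsplit]
    refine (ih.sub hterm).congr_deriv ?_
    ring

lemma strictMonoOn_erlangCDF {k : ℕ} (hk : 0 < k) : StrictMonoOn (erlangCDF k) (Ici 0) := by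
  obtain ⟨m, rfl⟩ := Nat.exists_eq_add_one.2 hk
  refine strictMonoOn_of_deriv_pos (convex_Ici 0) (continuous_erlangCDF _).continuousOn ?_
  intro x hx
  rw [interior_Ici] at hx
  rw [(hasDerivAt_erlangCDF_succ m x).deriv]
  exact div_pos (mul_pos (pow_pos hx m) (exp_pos _)) (by positivity)

lemma erlangCDF_le_of_le {j k : ℕ} (hjk : j ≤ k) {x : ℝ} (hx : 0 ≤ x) :
    erlangCDF k x ≤ erlangCDF j x := by
  have hsum :
      ∑ i ∈ Finset.range j, x ^ i / i.factorial ≤ ∑ i ∈ Finset.range k, x ^ i / i.factorial :=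
    Finset.sum_le_sum_of_subset_of_nonneg (Finset.range_subset_range.2 hjk)
      fun i _ _ => by positivity
  unfold erlangCDF
  nlinarith [exp_pos (-x)]

lemma gammaPDFReal_natCast_succ (k : ℕ) {x : ℝ} (hx : 0 ≤ x) :
    gammaPDFReal (k + 1 : ℕ) 1 x = x ^ k * exp (-x) / k.factorial := by
  rw [gammaPDFReal, if_pos hx, Nat.cast_succ, Real.Gamma_nat_eq_factorial, add_sub_cancel_right,
    Real.rpow_natCast, Real.one_rpow, one_mul]
  ring

lemma gammaMeasure_Iic_natCast {k : ℕ} (hk : 0 < k) {x : ℝ} (hx : 0 ≤ x) :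
    gammaMeasure k 1 (Iic x) = ENNReal.ofReal (erlangCDF k x) := by
  obtain ⟨m, rfl⟩ := Nat.exists_eq_add_one.2 hk
  set f : ℝ → ℝ := fun t => t ^ m * exp (-t) / m.factorial
  have hf : Continuous f := by fun_prop
  have hpdf : ∫⁻ t in Icc 0 x, gammaPDF (m + 1 : ℕ) 1 t = ∫⁻ t in Icc 0 x, ENNReal.ofReal (f t) :=
    setLIntegral_congr_fun measurableSet_Icc fun t ht => by
      rw [gammaPDF, gammaPDFReal_natCast_succ m ht.1]
  rw [gammaMeasure, withDensity_apply _ measurableSet_Iic,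
    lintegral_Iic_eq_lintegral_Iio_add_Icc _ hx, lintegral_gammaPDF_of_nonpos le_rfl, zero_add,
    hpdf, ← ofReal_integral_eq_lintegral_ofReal hf.integrableOn_Icc
      (ae_restrict_of_forall_mem measurableSet_Icc fun t ht => by
        have := ht.1; positivity),
    integral_Icc_eq_integral_Ioc, ← intervalIntegral.integral_of_le hx,
    intervalIntegral.integral_eq_sub_of_hasDerivAt (fun t _ => hasDerivAt_erlangCDF_succ m t)
      (hf.intervalIntegrable _ _), erlangCDF_apply_zero m.succ_pos, sub_zero]

lemma cdf_gammaMeasure_natCast {k : ℕ} (hk : 0 < k) (x : ℝ) :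
    cdf (gammaMeasure k 1) x = erlangCDF k (max x 0) := by
  have : IsProbabilityMeasure (gammaMeasure k 1) :=
    isProbabilityMeasure_gammaMeasure (Nat.cast_pos.2 hk) one_pos
  have hIic : ∀ {y : ℝ}, 0 ≤ y → cdf (gammaMeasure k 1) y = erlangCDF k y := fun hy => by
    rw [cdf_eq_real, measureReal_def, gammaMeasure_Iic_natCast hk hy, toReal_ofReal]
    exact erlangCDF_apply_zero hk ▸ (strictMonoOn_erlangCDF hk).monotoneOn self_mem_Ici hy hy
  rcases le_total 0 x with hx | hx
  · rw [max_eq_left hx, hIic hx]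
  · rw [max_eq_right hx, erlangCDF_apply_zero hk]
    refine le_antisymm ?_ (cdf_nonneg _ _)
    exact (monotone_cdf _ hx).trans_eq ((hIic le_rfl).trans (erlangCDF_apply_zero hk))

structure IsStrictCDFOnNonneg (μ : Measure ℝ) : Prop where
  isProbabilityMeasure : IsProbabilityMeasure μ
  continuous : Continuous (cdf μ)
  cdf_zero : cdf μ 0 = 0
  strictMonoOn : StrictMonoOn (cdf μ) (Ici 0)

/-- Only meaningful on `[0, 1)`, which `cdf μ` maps `[0, ∞)` onto bijectively when
`IsStrictCDFOnNonneg μ`. -/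
noncomputable def cdfInv (μ : Measure ℝ) : ℝ → ℝ := invFunOn (cdf μ) (Ici 0)

noncomputable def monotoneTransport (μ ν : Measure ℝ) : ℝ → ℝ := cdfInv ν ∘ cdf μ

namespace IsStrictCDFOnNonneg

variable {μ ν : Measure ℝ}

lemma cdf_of_nonpos (hμ : IsStrictCDFOnNonneg μ) {x : ℝ} (hx : x ≤ 0) : cdf μ x = 0 :=
  le_antisymm (hμ.cdf_zero ▸ monotone_cdf μ hx) (cdf_nonneg μ x)

lemma cdf_mem_Ico (hμ : IsStrictCDFOnNonneg μ) (x : ℝ) : cdf μ x ∈ Ico 0 1 := by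
  refine ⟨cdf_nonneg μ x, ?_⟩
  rcases le_total x 0 with hx | hx
  · rw [hμ.cdf_of_nonpos hx]; exact one_pos
  · exact (hμ.strictMonoOn hx (mem_Ici.2 (by linarith)) (lt_add_one x)).trans_le (cdf_le_one μ _)

lemma surjOn_cdf (hμ : IsStrictCDFOnNonneg μ) : SurjOn (cdf μ) (Ici 0) (Ico 0 1) := by
  rintro u ⟨hu0, hu1⟩
  obtain ⟨M, hM⟩ := ((tendsto_cdf_atTop μ).eventually (eventually_ge_nhds hu1)).exists
  have hM' : u ≤ cdf μ (max M 0) := hM.trans (monotone_cdf μ (le_max_left M 0))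
  obtain ⟨y, hy, rfl⟩ := intermediate_value_Icc (le_max_right M 0) hμ.continuous.continuousOn
    ⟨hμ.cdf_zero.symm ▸ hu0, hM'⟩
  exact ⟨y, hy.1, rfl⟩

lemma cdfInv_nonneg (hμ : IsStrictCDFOnNonneg μ) {u : ℝ} (hu : u ∈ Ico 0 1) :
    0 ≤ cdfInv μ u :=
  invFunOn_mem (hμ.surjOn_cdf hu)

lemma cdf_cdfInv (hμ : IsStrictCDFOnNonneg μ) {u : ℝ} (hu : u ∈ Ico 0 1) :
    cdf μ (cdfInv μ u) = u :=
  invFunOn_eq (hμ.surjOn_cdf hu)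

lemma le_cdfInv_iff (hμ : IsStrictCDFOnNonneg μ) {u : ℝ} (hu : u ∈ Ico 0 1) (y : ℝ) :
    y ≤ cdfInv μ u ↔ cdf μ y ≤ u := by
  rcases le_total y 0 with hy | hy
  · simp only [hy.trans (hμ.cdfInv_nonneg hu), hμ.cdf_of_nonpos hy, hu.1]
  · nth_rw 2 [← hμ.cdf_cdfInv hu]
    exact (hμ.strictMonoOn.le_iff_le hy (hμ.cdfInv_nonneg hu)).symm

lemma cdfInv_le_iff (hμ : IsStrictCDFOnNonneg μ) {u : ℝ} (hu : u ∈ Ico 0 1) {a : ℝ}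
    (ha : 0 ≤ a) : cdfInv μ u ≤ a ↔ u ≤ cdf μ a := by
  nth_rw 2 [← hμ.cdf_cdfInv hu]
  exact (hμ.strictMonoOn.le_iff_le (hμ.cdfInv_nonneg hu) ha).symm

lemma monotoneTransport_le_iff (hμ : IsStrictCDFOnNonneg μ) (hν : IsStrictCDFOnNonneg ν)
    (y : ℝ) {a : ℝ} (ha : 0 ≤ a) : monotoneTransport μ ν y ≤ a ↔ cdf μ y ≤ cdf ν a :=
  hν.cdfInv_le_iff (hμ.cdf_mem_Ico y) ha

lemma le_monotoneTransport_iff (hμ : IsStrictCDFOnNonneg μ) (hν : IsStrictCDFOnNonneg ν)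
    (x y : ℝ) : x ≤ monotoneTransport μ ν y ↔ cdf ν x ≤ cdf μ y :=
  hν.le_cdfInv_iff (hμ.cdf_mem_Ico y) x

lemma monotone_monotoneTransport (hμ : IsStrictCDFOnNonneg μ) (hν : IsStrictCDFOnNonneg ν) :
    Monotone (monotoneTransport μ ν) := fun x y hxy =>
  (hν.le_cdfInv_iff (hμ.cdf_mem_Ico y) _).2 <|
    (hν.cdf_cdfInv (hμ.cdf_mem_Ico x)).trans_le (monotone_cdf μ hxy)

lemma map_monotoneTransport (hμ : IsStrictCDFOnNonneg μ) (hν : IsStrictCDFOnNonneg ν) :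
    μ.map (monotoneTransport μ ν) = ν := by
  have := hμ.isProbabilityMeasure
  have := hν.isProbabilityMeasure
  have hT := (hμ.monotone_monotoneTransport hν).measurable
  refine Measure.ext_of_Iic _ _ fun a => ?_
  rw [Measure.map_apply hT measurableSet_Iic, ← ofReal_cdf]
  rcases lt_or_ge a 0 with ha | ha
  · have hpre : monotoneTransport μ ν ⁻¹' Iic a = ∅ := eq_empty_of_forall_notMem fun y hy =>
      ha.not_ge <| (hν.cdfInv_nonneg (hμ.cdf_mem_Ico y)).trans hy
    rw [hpre, measure_empty, hν.cdf_of_nonpos ha.le, ENNReal.ofReal_zero]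
  · have hpre : monotoneTransport μ ν ⁻¹' Iic a = Iic (cdfInv μ (cdf ν a)) := by
      ext y
      exact (hμ.monotoneTransport_le_iff hν y ha).trans (hμ.le_cdfInv_iff (hν.cdf_mem_Ico a) y).symm
    rw [hpre, ← ofReal_cdf, hμ.cdf_cdfInv (hν.cdf_mem_Ico a)]

lemma ae_nonneg_of_map_eq (hμ : IsStrictCDFOnNonneg μ) {Ω : Type*} [MeasurableSpace Ω]
    {P : Measure Ω} {X : Ω → ℝ} (hX : Measurable X) (hlaw : P.map X = μ) : ∀ᵐ ω ∂P, 0 ≤ X ω := by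
  have := hμ.isProbabilityMeasure
  refine ae_of_ae_map hX.aemeasurable (hlaw ▸ ?_)
  rw [ae_iff]
  refine measure_mono_null (t := Iic 0) (fun x hx => (not_le.1 hx).le) ?_
  rw [← ofReal_cdf, hμ.cdf_zero, ENNReal.ofReal_zero]

lemma map_monotoneTransport_comp (hμ : IsStrictCDFOnNonneg μ) (hν : IsStrictCDFOnNonneg ν)
    {Ω : Type*} [MeasurableSpace Ω] {P : Measure Ω} {X : Ω → ℝ} (hX : Measurable X)
    (hlaw : P.map X = μ) : P.map (monotoneTransport μ ν ∘ X) = ν := by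
  rw [← Measure.map_map (hμ.monotone_monotoneTransport hν).measurable hX, hlaw,
    hμ.map_monotoneTransport hν]

end IsStrictCDFOnNonneg

lemma isStrictCDFOnNonneg_gammaMeasure {k : ℕ} (hk : 0 < k) :
    IsStrictCDFOnNonneg (gammaMeasure k 1) where
  isProbabilityMeasure := isProbabilityMeasure_gammaMeasure (Nat.cast_pos.2 hk) one_pos
  continuous := by
    rw [funext (cdf_gammaMeasure_natCast hk)]
    exact (continuous_erlangCDF k).comp (continuous_id.max continuous_const)
  cdf_zero := by rw [cdf_gammaMeasure_natCast hk, max_self, erlangCDF_apply_zero hk]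
  strictMonoOn x hx y hy hxy := by
    rw [cdf_gammaMeasure_natCast hk, cdf_gammaMeasure_natCast hk, max_eq_left hx, max_eq_left hy]
    exact strictMonoOn_erlangCDF hk hx hy hxy

lemma cdf_gammaMeasure_le_of_le {j k : ℕ} (hj : 0 < j) (hjk : j ≤ k) (x : ℝ) :
    cdf (gammaMeasure k 1) x ≤ cdf (gammaMeasure j 1) x := by
  rw [cdf_gammaMeasure_natCast hj, cdf_gammaMeasure_natCast (hj.trans_le hjk)]
  exact erlangCDF_le_of_le hjk (le_max_right x 0)

lemma monotoneTransport_gammaMeasure_le_self {j k : ℕ} (hk : 0 < k) (hkj : k ≤ j) {x : ℝ}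
    (hx : 0 ≤ x) : monotoneTransport (gammaMeasure j 1) (gammaMeasure k 1) x ≤ x :=
  ((isStrictCDFOnNonneg_gammaMeasure (hk.trans_le hkj)).monotoneTransport_le_iff
    (isStrictCDFOnNonneg_gammaMeasure hk) x hx).2 (cdf_gammaMeasure_le_of_le hk hkj x)

lemma le_monotoneTransport_gammaMeasure_self {j k : ℕ} (hj : 0 < j) (hjk : j ≤ k) (x : ℝ) :
    x ≤ monotoneTransport (gammaMeasure j 1) (gammaMeasure k 1) x :=
  ((isStrictCDFOnNonneg_gammaMeasure hj).le_monotoneTransport_iff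
    (isStrictCDFOnNonneg_gammaMeasure (hj.trans_le hjk)) x x).2 (cdf_gammaMeasure_le_of_le hj hjk x)

lemma map_fun_eq_of_iIndepFun {ι Ω Ω' : Type*} {𝓧 : ι → Type*} [∀ i, MeasurableSpace (𝓧 i)]
    [MeasurableSpace Ω] [MeasurableSpace Ω'] {μ : Measure Ω} {μ' : Measure Ω'}
    {X : (i : ι) → Ω → 𝓧 i} {Y : (i : ι) → Ω' → 𝓧 i}
    (hX : ∀ i, Measurable (X i)) (hY : ∀ i, Measurable (Y i))
    (hXi : iIndepFun X μ) (hYi : iIndepFun Y μ') (hlaw : ∀ i, μ.map (X i) = μ'.map (Y i)) :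
    μ.map (fun ω i => X i ω) = μ'.map (fun ω i => Y i ω) := by
  rw [hXi.map_fun_eq_infinitePi_map hX, hYi.map_fun_eq_infinitePi_map hY, funext hlaw]

lemma measurable_sumElim {ι κ Ω β : Type*} [MeasurableSpace Ω] [MeasurableSpace β]
    {h : ι → Ω → β} {g : κ → Ω → β} (hh : ∀ i, Measurable (h i)) (hg : ∀ k, Measurable (g k)) :
    ∀ i, Measurable (Sum.elim h g i) :=
  fun i => i.rec hh hg

section Coverage

variable {Ω : Type*} (P : ℕ → ℝ) (x : ℕ → EuclideanSpace ℝ (Fin 2)) (α : ℝ) (β : ℕ → ℝ)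

def coverageEvent (h g : ℕ → Ω → ℝ) : Set Ω :=
  {ω | ∃ n, ENNReal.ofReal (β n) < SIR P x α h g n ω}

variable {P x α β}

lemma measurable_SIR [MeasurableSpace Ω] {h g : ℕ → Ω → ℝ} (hh : ∀ n, Measurable (h n))
    (hg : ∀ n, Measurable (g n)) (n : ℕ) : Measurable (SIR P x α h g n) := by
  unfold SIR interference
  refine (((hh n).const_mul _).mul_const _).ennreal_ofReal.div
    (Measurable.tsum fun m => ?_)
  split_ifs
  exacts [measurable_const, (((hg m).const_mul _).mul_const _).ennreal_ofReal]

lemma measurableSet_coverageEvent [MeasurableSpace Ω] {h g : ℕ → Ω → ℝ}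
    (hh : ∀ n, Measurable (h n)) (hg : ∀ n, Measurable (g n)) :
    MeasurableSet (coverageEvent P x α β h g) := by
  rw [coverageEvent, Set.ofPred_exists]
  exact MeasurableSet.iUnion fun n => measurableSet_lt measurable_const (measurable_SIR hh hg n)

lemma SIR_mono (hP : ∀ n, 0 ≤ P n) {h₁ h₂ g₁ g₂ : ℕ → Ω → ℝ} {n : ℕ} {ω : Ω}
    (hh : h₁ n ω ≤ h₂ n ω) (hg : ∀ m, g₂ m ω ≤ g₁ m ω) :
    SIR P x α h₁ g₁ n ω ≤ SIR P x α h₂ g₂ n ω := by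
  have hpl : ∀ m {a b : ℝ}, a ≤ b →
      ENNReal.ofReal (P m * a * ‖x m‖ ^ (-α)) ≤ ENNReal.ofReal (P m * b * ‖x m‖ ^ (-α)) :=
    fun m a b hab => ENNReal.ofReal_le_ofReal <| mul_le_mul_of_nonneg_right
      (mul_le_mul_of_nonneg_left hab (hP m)) (Real.rpow_nonneg (norm_nonneg _) _)
  refine ENNReal.div_le_div (hpl n hh) (ENNReal.tsum_le_tsum fun m => ?_)
  split_ifs
  exacts [le_rfl, hpl m (hg m)]

lemma coverageEvent_eq_preimage (h g : ℕ → Ω → ℝ) :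
    coverageEvent P x α β h g = (fun ω i => Sum.elim h g i ω) ⁻¹'
      coverageEvent P x α β (fun n F => F (Sum.inl n)) (fun n F => F (Sum.inr n)) :=
  rfl

lemma measure_coverageEvent_le_of_coupling (hP : ∀ n, 0 ≤ P n)
    {Ω' : Type*} [MeasurableSpace Ω] [MeasurableSpace Ω'] {μ : Measure Ω} {μ' : Measure Ω'}
    {h g h₁ g₁ : ℕ → Ω → ℝ} {h' g' : ℕ → Ω' → ℝ}
    (hm₁ : ∀ i, Measurable (Sum.elim h₁ g₁ i)) (hm' : ∀ i, Measurable (Sum.elim h' g' i))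
    (hlaw : μ.map (fun ω i => Sum.elim h₁ g₁ i ω) = μ'.map (fun ω i => Sum.elim h' g' i ω))
    (hle : ∀ᵐ ω ∂μ, ∀ n, h₁ n ω ≤ h n ω ∧ g n ω ≤ g₁ n ω) :
    μ' (coverageEvent P x α β h' g') ≤ μ (coverageEvent P x α β h g) := by
  let C := coverageEvent P x α β (fun n (F : ℕ ⊕ ℕ → ℝ) => F (Sum.inl n)) (fun n F => F (Sum.inr n))
  have hC : MeasurableSet C :=
    measurableSet_coverageEvent (fun n => measurable_pi_apply _) (fun n => measurable_pi_apply _)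
  calc μ' (coverageEvent P x α β h' g')
      = μ'.map (fun ω i => Sum.elim h' g' i ω) C := by
        rw [coverageEvent_eq_preimage h' g', Measure.map_apply (measurable_pi_lambda _ hm') hC]
    _ = μ (coverageEvent P x α β h₁ g₁) := by
        rw [← hlaw, coverageEvent_eq_preimage h₁ g₁, Measure.map_apply
          (measurable_pi_lambda _ hm₁) hC]
    _ ≤ μ (coverageEvent P x α β h g) := by
        refine measure_mono_ae ?_
        filter_upwards [hle] with ω hω
        rintro ⟨n, hn⟩
        exact ⟨n, hn.trans_le (SIR_mono hP (hω n).1 fun m => (hω m).2)⟩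

end Coverage

theorem coverage_ordering_general
    (α : ℝ)
    (x : ℕ → EuclideanSpace ℝ (Fin 2))
    (P : ℕ → ℝ) (hP : ∀ n, 0 < P n)
    (β : ℕ → ℝ)
    (Δ Ψ Δ' Ψ' : ℕ → ℕ)
    (hΔpos : ∀ n, 0 < Δ n) (hΨpos : ∀ n, 0 < Ψ n)
    (hΔ'pos : ∀ n, 0 < Δ' n) (hΨ'pos : ∀ n, 0 < Ψ' n)
    (hΔ : ∀ n, Δ' n ≤ Δ n) (hΨ : ∀ n, Ψ n ≤ Ψ' n)
    {Ω : Type*} [MeasurableSpace Ω] (μ : Measure Ω)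
    {Ω' : Type*} [MeasurableSpace Ω'] (μ' : Measure Ω')
    (h g : ℕ → Ω → ℝ) (h' g' : ℕ → Ω' → ℝ)
    (hhm : ∀ n, Measurable (h n)) (hgm : ∀ n, Measurable (g n))
    (hh'm : ∀ n, Measurable (h' n)) (hg'm : ∀ n, Measurable (g' n))
    (hindep : iIndepFun
      (Sum.elim h g) μ)
    (hindep' : iIndepFun
      (Sum.elim h' g') μ')
    (hhd : ∀ n, Measure.map (h n) μ = gammaMeasure (Δ n) 1)
    (hgd : ∀ n, Measure.map (g n) μ = gammaMeasure (Ψ n) 1)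
    (hh'd : ∀ n, Measure.map (h' n) μ' = gammaMeasure (Δ' n) 1)
    (hg'd : ∀ n, Measure.map (g' n) μ' = gammaMeasure (Ψ' n) 1) :
    μ' {ω | ∃ n : ℕ, ENNReal.ofReal (β n) < SIR P x α h' g' n ω} ≤
      μ {ω | ∃ n : ℕ, ENNReal.ofReal (β n) < SIR P x α h g n ω} := by
  have hγ {k : ℕ} (hk : 0 < k) := isStrictCDFOnNonneg_gammaMeasure hk
  let T : ℕ ⊕ ℕ → ℝ → ℝ := Sum.elim
    (fun n => monotoneTransport (gammaMeasure (Δ n) 1) (gammaMeasure (Δ' n) 1))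
    (fun n => monotoneTransport (gammaMeasure (Ψ n) 1) (gammaMeasure (Ψ' n) 1))
  have hT : ∀ i, Measurable (T i) := measurable_sumElim
    (fun n => ((hγ (hΔpos n)).monotone_monotoneTransport (hγ (hΔ'pos n))).measurable)
    (fun n => ((hγ (hΨpos n)).monotone_monotoneTransport (hγ (hΨ'pos n))).measurable)
  let h₁ : ℕ → Ω → ℝ := fun n => T (.inl n) ∘ h n
  let g₁ : ℕ → Ω → ℝ := fun n => T (.inr n) ∘ g n
  have hm₁ : ∀ i, Measurable (Sum.elim h₁ g₁ i) :=
    measurable_sumElim (fun n => (hT _).comp (hhm n)) (fun n => (hT _).comp (hgm n))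
  have hindep₁ : iIndepFun (Sum.elim h₁ g₁) μ := by
    convert hindep.comp T hT using 1
    funext i
    cases i <;> rfl
  have hlaw : ∀ i, μ.map (Sum.elim h₁ g₁ i) = μ'.map (Sum.elim h' g' i) := by
    rintro (n | n)
    · exact ((hγ (hΔpos n)).map_monotoneTransport_comp (hγ (hΔ'pos n)) (hhm n) (hhd n)).trans
        (hh'd n).symm
    · exact ((hγ (hΨpos n)).map_monotoneTransport_comp (hγ (hΨ'pos n)) (hgm n) (hgd n)).trans
        (hg'd n).symm
  refine measure_coverageEvent_le_of_coupling (fun n => (hP n).le) hm₁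
    (measurable_sumElim hh'm hg'm) (map_fun_eq_of_iIndepFun hm₁ (measurable_sumElim hh'm hg'm)
      hindep₁ hindep' hlaw) ?_
  filter_upwards [ae_all_iff.2 fun n => (hγ (hΔpos n)).ae_nonneg_of_map_eq (hhm n) (hhd n)]
    with ω hω n
  exact ⟨monotoneTransport_gammaMeasure_le_self (hΔ'pos n) (hΔ n) (hω n),
    le_monotoneTransport_gammaMeasure_self (hΨpos n) (hΨ n) _⟩

/-- Coverage ordering: larger direct-link shapes `Δ` and smaller interfering shapes `Ψ`
give a larger coverage probability. -/
theorem coverage_ordering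
    (α : ℝ) (hα : 2 < α)
    (x : ℕ → EuclideanSpace ℝ (Fin 2)) (hx : ∀ n, x n ≠ 0)
    (P : ℕ → ℝ) (hP : ∀ n, 0 < P n)
    (β : ℕ → ℝ) (hβ : ∀ n, 0 < β n)
    (Δ Ψ Δ' Ψ' : ℕ → ℕ)
    (hΔpos : ∀ n, 0 < Δ n) (hΨpos : ∀ n, 0 < Ψ n)
    (hΔ'pos : ∀ n, 0 < Δ' n) (hΨ'pos : ∀ n, 0 < Ψ' n)
    (hΔ : ∀ n, Δ' n ≤ Δ n) (hΨ : ∀ n, Ψ n ≤ Ψ' n)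
    {Ω : Type*} [MeasurableSpace Ω] (μ : Measure Ω) [IsProbabilityMeasure μ]
    {Ω' : Type*} [MeasurableSpace Ω'] (μ' : Measure Ω') [IsProbabilityMeasure μ']
    (h g : ℕ → Ω → ℝ) (h' g' : ℕ → Ω' → ℝ)
    (hhm : ∀ n, Measurable (h n)) (hgm : ∀ n, Measurable (g n))
    (hh'm : ∀ n, Measurable (h' n)) (hg'm : ∀ n, Measurable (g' n))
    (hindep : iIndepFun
      (Sum.elim h g) μ)
    (hindep' : iIndepFun
      (Sum.elim h' g') μ')
    (hhd : ∀ n, Measure.map (h n) μ = gammaMeasure (Δ n) 1)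
    (hgd : ∀ n, Measure.map (g n) μ = gammaMeasure (Ψ n) 1)
    (hh'd : ∀ n, Measure.map (h' n) μ' = gammaMeasure (Δ' n) 1)
    (hg'd : ∀ n, Measure.map (g' n) μ' = gammaMeasure (Ψ' n) 1) :
    μ' {ω | ∃ n : ℕ, ENNReal.ofReal (β n) < SIR P x α h' g' n ω} ≤
      μ {ω | ∃ n : ℕ, ENNReal.ofReal (β n) < SIR P x α h g n ω} :=
  coverage_ordering_general α x P hP β Δ Ψ Δ' Ψ' hΔpos hΨpos hΔ'pos hΨ'pos hΔ hΨ μ μ' h g h' g' hhm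
    hgm hh'm hg'm hindep hindep' hhd hgd hh'd hg'd
end

section
/- Let α > 2 be a real number, Ψ a positive integer, and a > 0 a real number. Then ∫_{ℝ²} ( 1 − (1 + a‖y‖^{-α})^{-Ψ} ) dy = a^{2/α} · C(α, Ψ), where the integral is over ℝ² with Lebesgue measure. -/
open MeasureTheory Real

/-- Euler's Beta function `B(a, b) = ∫_0^1 t^(a-1) (1-t)^(b-1) dt`. -/
noncomputable def betaFn (a b : ℝ) : ℝ :=
  ∫ t in (0:ℝ)..1, t ^ (a - 1) * (1 - t) ^ (b - 1)

/-- The constant `C(α, Ψ) = (2π/α) Σ_{m=1}^{Ψ} binom(Ψ,m) B(Ψ - m + 2/α, m - 2/α)`. -/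
noncomputable def Cfun (α : ℝ) (Ψ : ℕ) : ℝ :=
  (2 * π / α) * ∑ m ∈ Finset.Icc 1 Ψ,
    (Ψ.choose m : ℝ) * betaFn ((Ψ : ℝ) - m + 2 / α) ((m : ℝ) - 2 / α)

/-! Polar coordinates turn the integral into `2π ∫₀^∞ r f(r) dr`, and the substitutions
`r = s^(-1/α)`, `s = u / a` pull out the factor `a^(2/α) / α`, leaving
`∫₀^∞ u^(-2/α-1) (1 - (1+u)^(-Ψ)) du`. Under `u = 1/t - 1` this becomes
`∫₀¹ t^(2/α-1) (1-t)^(-2/α-1) (1 - t^Ψ) dt`, and the binomial expansion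
`1 - t^Ψ = Σ_{m ≥ 1} binom(Ψ,m) (1-t)^m t^(Ψ-m)` splits it into Beta integrals. -/

open Set

section
variable {E : Type*} [NormedAddCommGroup E] [NormedSpace ℝ E]

theorem integral_fun_norm_euclideanSpace_fin_two (f : ℝ → E) :
    ∫ y : EuclideanSpace ℝ (Fin 2), f ‖y‖ = (2 * π) • ∫ r in Ioi (0:ℝ), r • f r := by
  rw [integral_fun_norm_addHaar volume f, finrank_euclideanSpace_fin, measureReal_def,
    EuclideanSpace.volume_ball_fin_two]
  norm_num [ENNReal.toReal_ofReal pi_nonneg, mul_smul, ← Nat.cast_smul_eq_nsmul ℝ 2]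

theorem integral_Ioi_smul_comp_rpow_neg (g : ℝ → E) {α : ℝ} (hα : 0 < α) :
    ∫ r in Ioi (0:ℝ), r • g (r ^ (-α)) = α⁻¹ • ∫ s in Ioi (0:ℝ), s ^ (-(2 / α) - 1) • g s := by
  rw [← integral_smul, ← integral_comp_rpow_Ioi (fun s => α⁻¹ • s ^ (-(2 / α) - 1) • g s)
    (neg_ne_zero.mpr hα.ne')]
  refine setIntegral_congr_fun measurableSet_Ioi fun r (hr : 0 < r) => ?_
  have hexp : (-α - 1) + -α * (-(2 / α) - 1) = 1 := by field_simp; ring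
  simp only [smul_smul]
  rw [abs_neg, abs_of_pos hα, ← rpow_mul hr.le]
  congr 1
  rw [mul_mul_mul_comm, mul_inv_cancel₀ hα.ne', one_mul, ← rpow_add hr, hexp, rpow_one]

theorem integral_Ioi_rpow_smul_comp_mul_left (g : ℝ → E) (c : ℝ) {a : ℝ} (ha : 0 < a) :
    ∫ s in Ioi (0:ℝ), s ^ c • g (a * s) = a ^ (-c - 1) • ∫ u in Ioi (0:ℝ), u ^ c • g u := by
  have := integral_comp_mul_left_Ioi (fun u => (u / a) ^ c • g u) 0 ha
  simp only [mul_zero, mul_div_cancel_left₀ _ ha.ne'] at this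
  rw [this, ← integral_smul, ← integral_smul]
  refine setIntegral_congr_fun measurableSet_Ioi fun u (hu : 0 < u) => ?_
  rw [smul_smul, smul_smul, div_rpow hu.le ha.le, rpow_sub ha, rpow_neg ha.le, rpow_one]
  field_simp

theorem integral_Ioi_eq_integral_Ioo_comp_inv_sub_one (g : ℝ → E) :
    ∫ u in Ioi (0:ℝ), g u = ∫ t in Ioo (0:ℝ) 1, (t ^ 2)⁻¹ • g (t⁻¹ - 1) := by
  have himage : (fun t : ℝ => t⁻¹ - 1) '' Ioo 0 1 = Ioi 0 := by
    ext u
    constructor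
    · rintro ⟨t, ⟨ht0, ht1⟩, rfl⟩
      exact sub_pos.mpr ((one_lt_inv₀ ht0).mpr ht1)
    · intro (hu : 0 < u)
      refine ⟨(u + 1)⁻¹, ⟨by positivity, inv_lt_one_of_one_lt₀ (by linarith)⟩, ?_⟩
      simp
  rw [← himage, integral_image_eq_integral_abs_deriv_smul measurableSet_Ioo
    (fun t ht => ((hasDerivAt_inv ht.1.ne').sub_const 1).hasDerivWithinAt)
    (fun s _ t _ h => inv_injective (sub_left_injective h))]
  simp
end

theorem sum_Icc_choose_mul_pow_mul_pow {R : Type*} [CommRing R] (x y : R) (n : ℕ) :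
    ∑ m ∈ Finset.Icc 1 n, (n.choose m : R) * x ^ m * y ^ (n - m) = (x + y) ^ n - y ^ n := by
  rw [add_pow, Finset.range_eq_Ico, Finset.sum_eq_sum_Ico_succ_bot n.succ_pos,
    Nat.succ_eq_add_one, zero_add, Finset.Ico_add_one_right_eq_Icc]
  simp only [pow_zero, one_mul, Nat.sub_zero, Nat.choose_zero_right, Nat.cast_one, mul_one,
    add_sub_cancel_left]
  exact Finset.sum_congr rfl fun _ _ => by ring

theorem integrableOn_Ioo_rpow_mul_one_sub_rpow {x y : ℝ} (hx : 0 < x) (hy : 0 < y) :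
    IntegrableOn (fun t : ℝ => t ^ (x - 1) * (1 - t) ^ (y - 1)) (Ioo 0 1) := by
  have h := (Complex.betaIntegral_convergent (u := x) (v := y)
    (by simpa using hx) (by simpa using hy)).norm
  rw [intervalIntegrable_iff_integrableOn_Ioc_of_le zero_le_one] at h
  refine (h.mono_set Ioo_subset_Ioc_self).congr_fun (fun t ⟨ht0, ht1⟩ => ?_) measurableSet_Ioo
  have ht1' : 0 < 1 - t := sub_pos.mpr ht1
  simp only [norm_mul, ← Complex.ofReal_one, ← Complex.ofReal_sub,
    Complex.norm_cpow_eq_rpow_re_of_pos ht0, Complex.norm_cpow_eq_rpow_re_of_pos ht1',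
    Complex.ofReal_re]

theorem betaFn_eq_integral_Ioo (x y : ℝ) :
    betaFn x y = ∫ t in Ioo (0:ℝ) 1, t ^ (x - 1) * (1 - t) ^ (y - 1) := by
  rw [betaFn, intervalIntegral.integral_of_le zero_le_one, integral_Ioc_eq_integral_Ioo]

theorem rpow_mul_rpow_mul_one_sub_pow_eq_sum {t : ℝ} (ht : t ∈ Ioo 0 1) (c : ℝ) (n : ℕ) :
    t ^ (c - 1) * (1 - t) ^ (-c - 1) * (1 - t ^ n) =
      ∑ m ∈ Finset.Icc 1 n,
        (n.choose m : ℝ) * (t ^ ((n:ℝ) - m + c - 1) * (1 - t) ^ ((m:ℝ) - c - 1)) := by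
  have ht1 : 0 < 1 - t := sub_pos.mpr ht.2
  have hbinom := sum_Icc_choose_mul_pow_mul_pow (1 - t) t n
  rw [sub_add_cancel, one_pow] at hbinom
  rw [← hbinom, Finset.mul_sum]
  refine Finset.sum_congr rfl fun m hm => ?_
  have hmn : m ≤ n := (Finset.mem_Icc.mp hm).2
  rw [show (n:ℝ) - m + c - 1 = ((n - m : ℕ) : ℝ) + (c - 1) by push_cast [hmn]; ring,
    show (m:ℝ) - c - 1 = (m : ℝ) + (-c - 1) by ring,
    rpow_add ht.1, rpow_add ht1, rpow_natCast, rpow_natCast]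
  ring

theorem integral_Ioo_rpow_mul_one_sub_rpow_mul_one_sub_pow {c : ℝ} (hc0 : 0 < c) (hc1 : c < 1)
    (n : ℕ) :
    ∫ t in Ioo (0:ℝ) 1, t ^ (c - 1) * (1 - t) ^ (-c - 1) * (1 - t ^ n) =
      ∑ m ∈ Finset.Icc 1 n, (n.choose m : ℝ) * betaFn ((n:ℝ) - m + c) ((m:ℝ) - c) := by
  rw [setIntegral_congr_fun measurableSet_Ioo fun t ht =>
    rpow_mul_rpow_mul_one_sub_pow_eq_sum ht c n, integral_finsetSum]
  · simp only [betaFn_eq_integral_Ioo, integral_const_mul]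
  · intro m hm
    obtain ⟨h1m, hmn⟩ := Finset.mem_Icc.mp hm
    have h1m' : (1:ℝ) ≤ m := by exact_mod_cast h1m
    have hmn' : (m:ℝ) ≤ n := by exact_mod_cast hmn
    exact (integrableOn_Ioo_rpow_mul_one_sub_rpow (by linarith) (by linarith)).const_mul _

theorem integral_Ioi_rpow_mul_one_sub_inv_one_add_pow {c : ℝ} (hc0 : 0 < c) (hc1 : c < 1)
    (n : ℕ) :
    ∫ u in Ioi (0:ℝ), u ^ (-c - 1) * (1 - ((1 + u) ^ n)⁻¹) =
      ∑ m ∈ Finset.Icc 1 n, (n.choose m : ℝ) * betaFn ((n:ℝ) - m + c) ((m:ℝ) - c) := by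
  rw [integral_Ioi_eq_integral_Ioo_comp_inv_sub_one,
    ← integral_Ioo_rpow_mul_one_sub_rpow_mul_one_sub_pow hc0 hc1]
  refine setIntegral_congr_fun measurableSet_Ioo fun t ⟨ht0, ht1⟩ => ?_
  have ht1' : 0 < 1 - t := sub_pos.mpr ht1
  rw [smul_eq_mul, add_sub_cancel, inv_pow, inv_inv,
    show t⁻¹ - 1 = (1 - t) * t⁻¹ by field_simp, mul_rpow ht1'.le (inv_nonneg.mpr ht0.le),
    inv_rpow ht0.le, ← rpow_neg ht0.le, show -(-c - 1) = (c - 1) + 2 by ring,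
    rpow_add ht0, rpow_two]
  field_simp

theorem integral_one_sub_inv_one_add_norm_rpow_general
    (α : ℝ) (hα : 2 < α) (Ψ : ℕ) (a : ℝ) (ha : 0 < a) :
    ∫ y : EuclideanSpace ℝ (Fin 2), (1 - ((1 + a * ‖y‖ ^ (-α)) ^ Ψ)⁻¹) =
      a ^ (2 / α) * Cfun α Ψ := by
  have hα0 : 0 < α := by linarith
  rw [integral_fun_norm_euclideanSpace_fin_two (fun r => 1 - ((1 + a * r ^ (-α)) ^ Ψ)⁻¹),
    integral_Ioi_smul_comp_rpow_neg (fun s => 1 - ((1 + a * s) ^ Ψ)⁻¹) hα0,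
    integral_Ioi_rpow_smul_comp_mul_left (fun u => 1 - ((1 + u) ^ Ψ)⁻¹) _ ha,
    show -(-(2 / α) - 1) - 1 = 2 / α by ring]
  simp only [smul_eq_mul]
  rw [integral_Ioi_rpow_mul_one_sub_inv_one_add_pow (by positivity) ((div_lt_one hα0).mpr hα), Cfun]
  ring

/-- For `α > 2`, `Ψ ≥ 1` and `a > 0`,
`∫_{ℝ²} (1 − (1 + a‖y‖^{-α})^{-Ψ}) dy = a^{2/α} · C(α, Ψ)`. -/
theorem integral_one_sub_inv_one_add_norm_rpow
    (α : ℝ) (hα : 2 < α) (Ψ : ℕ) (hΨ : 1 ≤ Ψ) (a : ℝ) (ha : 0 < a) :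
    ∫ y : EuclideanSpace ℝ (Fin 2), (1 - ((1 + a * ‖y‖ ^ (-α)) ^ Ψ)⁻¹) =
      a ^ (2 / α) * Cfun α Ψ :=
  integral_one_sub_inv_one_add_norm_rpow_general α hα Ψ a ha
end

section
/- For every real number α > 2, the function M ↦ C(α, M) is strictly increasing on the positive integers: C(α, M+1) > C(α, M) for every positive integer M. In particular, C(α, M) > C(α, 1) for every integer M > 1. -/
open MeasureTheory Real

/-!
Writing `s = 2/α ∈ (0, 1)`, Pascal's rule `binom(n+1, m) = binom(n, m-1) + binom(n, m)` and the
Beta recursion `B(x, y) = B(x+1, y) + B(x, y+1)` make the sum defining `C(α, n+1)` telescope onto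
the one defining `C(α, n)`, leaving the single extra term `(2π/α) B(n + s, 1 - s) > 0`.
-/

open Finset

theorem sum_Icc_one_eq_sum_range {M : Type*} [AddCommMonoid M] (f : ℕ → M) (n : ℕ) :
    ∑ m ∈ Icc 1 n, f m = ∑ i ∈ range n, f (i + 1) := by
  rw [← Ico_add_one_right_eq_Icc, sum_Ico_eq_sum_range]
  simp [add_comm]

theorem sum_Icc_choose_succ_nsmul {M : Type*} [AddCommMonoid M] (g : ℕ → M) (n : ℕ) :
    ∑ m ∈ Icc 1 (n + 1), (n + 1).choose m • g m =
      ∑ m ∈ Icc 1 n, n.choose m • (g m + g (m + 1)) + g 1 := by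
  simp only [sum_Icc_one_eq_sum_range, Nat.choose_succ_succ, add_smul, sum_add_distrib, smul_add]
  rw [sum_range_succ', sum_range_succ _ n, Nat.choose_succ_self]
  simp only [Nat.choose_zero_right, one_smul, zero_smul, add_zero]
  abel

section Beta

variable {a b : ℝ}

theorem intervalIntegrable_betaFn_integrand (ha : 0 < a) (hb : 0 < b) :
    IntervalIntegrable (fun t : ℝ => t ^ (a - 1) * (1 - t) ^ (b - 1)) volume 0 1 := by
  have h := Complex.betaIntegral_convergent (u := a) (v := b) (by simpa) (by simpa)
  refine IntervalIntegrable.congr_uIoo ⟨h.1.re, h.2.re⟩ fun t ht => ?_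
  rw [Set.uIoo_of_le zero_le_one] at ht
  have h1t : 0 ≤ 1 - t := by linarith [ht.2]
  simp only [RCLike.re_to_complex]
  norm_cast
  rw [← Complex.ofReal_cpow ht.1.le, ← Complex.ofReal_cpow h1t, ← Complex.ofReal_mul,
    Complex.ofReal_re]

theorem betaFn_pos (ha : 0 < a) (hb : 0 < b) : 0 < betaFn a b :=
  intervalIntegral.intervalIntegral_pos_of_pos_on (intervalIntegrable_betaFn_integrand ha hb)
    (fun _ ht => mul_pos (rpow_pos_of_pos ht.1 _) (rpow_pos_of_pos (sub_pos.2 ht.2) _)) one_pos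

theorem betaFn_add_one_left_add_betaFn_add_one_right (ha : 0 < a) (hb : 0 < b) :
    betaFn (a + 1) b + betaFn a (b + 1) = betaFn a b := by
  unfold betaFn
  rw [← intervalIntegral.integral_add
    (by simpa using intervalIntegrable_betaFn_integrand (a := a + 1) (by positivity) hb)
    (by simpa using intervalIntegrable_betaFn_integrand (b := b + 1) ha (by positivity))]
  refine intervalIntegral.integral_congr fun t ht => ?_
  rw [Set.uIcc_of_le zero_le_one] at ht
  have h1t : 0 ≤ 1 - t := by linarith [ht.2]
  -- `rpow_add_one'` needs only a nonnegative base, so the endpoints `t = 0, 1` need no care.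
  rw [add_sub_cancel_right, add_sub_cancel_right, ← sub_add_cancel a 1,
    rpow_add_one' ht.1 (by simpa using ha.ne'), ← sub_add_cancel b 1,
    rpow_add_one' h1t (by simpa using hb.ne')]
  simp only [add_sub_cancel_right]
  ring

end Beta

section BinomialBetaSum

variable {s : ℝ}

noncomputable def binomialBetaSum (s : ℝ) (n : ℕ) : ℝ :=
  ∑ m ∈ Icc 1 n, (n.choose m : ℝ) * betaFn (n - m + s) (m - s)

theorem binomialBetaSum_succ (hs₀ : 0 < s) (hs₁ : s < 1) (n : ℕ) :
    binomialBetaSum s (n + 1) = binomialBetaSum s n + betaFn (n + s) (1 - s) := by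
  unfold binomialBetaSum
  simp only [← nsmul_eq_mul]
  rw [sum_Icc_choose_succ_nsmul (fun m => betaFn (((n + 1 : ℕ) : ℝ) - m + s) (m - s))]
  congr 1
  · refine sum_congr rfl fun m hm => congrArg _ ?_
    obtain ⟨hm₁, hmn⟩ : (1 : ℝ) ≤ m ∧ (m : ℝ) ≤ n := by
      rw [mem_Icc] at hm
      exact ⟨Nat.one_le_cast.2 hm.1, Nat.cast_le.2 hm.2⟩
    rw [← betaFn_add_one_left_add_betaFn_add_one_right (a := n - m + s) (b := m - s)
      (by linarith) (by linarith)]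
    push_cast
    ring_nf
  · push_cast
    ring_nf

theorem binomialBetaSum_strictMono (hs₀ : 0 < s) (hs₁ : s < 1) :
    StrictMono (binomialBetaSum s) :=
  strictMono_nat_of_lt_succ fun n => by
    rw [binomialBetaSum_succ hs₀ hs₁]
    linarith [betaFn_pos (by positivity : 0 < (n : ℝ) + s) (sub_pos.2 hs₁)]

end BinomialBetaSum

/-- For `α > 2`, `M ↦ C(α, M)` is strictly increasing on positive integers;
in particular `C(α, M) > C(α, 1)` for every integer `M > 1`. -/
theorem Cfun_strictMono (α : ℝ) (hα : 2 < α) :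
    (∀ M : ℕ, 0 < M → Cfun α M < Cfun α (M + 1)) ∧
    (∀ M : ℕ, 1 < M → Cfun α 1 < Cfun α M) := by
  have hα₀ : 0 < α := by linarith
  have hmono : StrictMono (Cfun α) :=
    (binomialBetaSum_strictMono (by positivity) ((div_lt_one hα₀).2 hα)).const_mul
      (by positivity : 0 < 2 * π / α)
  exact ⟨fun M _ => hmono M.lt_add_one, fun M hM => hmono hM⟩
end

section
/- For every real number α > 2, lim_{M → ∞} C(α, M) / M^{2/α} = π · Γ(1 − 2/α), where the limit is over positive integers M and Γ is the Gamma function. -/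
/-!
Put `s = 2 / α ∈ (0, 1)`. For `0 < x < 1` the binomial theorem gives
`∑_{m=1}^{n} binom(n, m) (1 - x)^m x^(n-m) = 1 - x^n = (1 - x) ∑_{k<n} x^k`; multiplying by
`x^(s-1) (1 - x)^(-s-1)` and integrating over `(0, 1)` turns the sum defining `C(α, n)` into
`∑_{k<n} B(k + s, 1 - s) = Γ(1 - s) ∑_{k<n} Γ(k + s) / Γ(k + 1)`, which telescopes to
`Γ(1 - s) Γ(n + s) / (s Γ(n))`. Thus `C(α, n) = π Γ(1 - s) Γ(n + s) / Γ(n)`, and Euler's limit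
formula `Γ(s) = lim n^s n! / (s (s + 1) ⋯ (s + n))` gives `Γ(n + s) ~ Γ(n) n^s`.
-/

open MeasureTheory Real Filter

open Finset Topology

lemma Complex.ofReal_rpow_mul_one_sub_rpow {x : ℝ} (hx₀ : 0 ≤ x) (hx₁ : x ≤ 1) (a b : ℝ) :
    ((x ^ (a - 1) * (1 - x) ^ (b - 1) : ℝ) : ℂ) =
      (x : ℂ) ^ ((a : ℂ) - 1) * (1 - (x : ℂ)) ^ ((b : ℂ) - 1) := by
  rw [Complex.ofReal_mul, Complex.ofReal_cpow hx₀, Complex.ofReal_cpow (sub_nonneg.2 hx₁)]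
  push_cast
  rfl

lemma ofReal_betaFn (a b : ℝ) : (betaFn a b : ℂ) = Complex.betaIntegral a b := by
  rw [betaFn, Complex.betaIntegral, ← intervalIntegral.integral_ofReal]
  refine intervalIntegral.integral_congr fun x hx => ?_
  rw [Set.uIcc_of_le zero_le_one] at hx
  exact Complex.ofReal_rpow_mul_one_sub_rpow hx.1 hx.2 a b

lemma betaFn_eq_Gamma_mul_div {a b : ℝ} (ha : 0 < a) (hb : 0 < b) :
    betaFn a b = Gamma a * Gamma b / Gamma (a + b) := by
  have h := Complex.betaIntegral_eq_Gamma_mul_div a b (by simpa) (by simpa)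
  rw [← ofReal_betaFn, ← Complex.ofReal_add] at h
  simp only [Complex.Gamma_ofReal] at h
  exact_mod_cast h

lemma intervalIntegrable_betaIntegrand {a b : ℝ} (ha : 0 < a) (hb : 0 < b) :
    IntervalIntegrable (fun t : ℝ => t ^ (a - 1) * (1 - t) ^ (b - 1)) volume 0 1 := by
  have h := Integrable.re
    (Complex.betaIntegral_convergent (u := a) (v := b) (by simpa) (by simpa)).1
  refine (intervalIntegrable_iff_integrableOn_Ioc_of_le zero_le_one).2
    (IntegrableOn.congr_fun h (fun x hx => ?_) measurableSet_Ioc)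
  rw [← Complex.ofReal_rpow_mul_one_sub_rpow hx.1.le hx.2]
  exact Complex.ofReal_re _

lemma sum_Icc_choose_mul_one_sub_pow_mul_pow {R : Type*} [CommRing R] (x : R) (n : ℕ) :
    ∑ m ∈ Icc 1 n, (n.choose m : R) * ((1 - x) ^ m * x ^ (n - m))
      = (1 - x) * ∑ k ∈ range n, x ^ k := by
  have h := add_pow (1 - x) x n
  rw [sub_add_cancel, one_pow, range_eq_Ico, sum_eq_sum_Ico_succ_bot (by omega : 0 < n + 1),
    zero_add, Ico_add_one_right_eq_Icc] at h
  simp only [pow_zero, Nat.choose_zero_right, Nat.sub_zero, Nat.cast_one, one_mul, mul_one] at h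
  rw [mul_neg_geom_sum, sum_congr rfl fun m _ => mul_comm _ _]
  linear_combination -h

lemma sum_choose_mul_betaIntegrand {x : ℝ} (hx₀ : 0 < x) (hx₁ : x < 1) (s : ℝ) (n : ℕ) :
    ∑ m ∈ Icc 1 n, (n.choose m : ℝ) * (x ^ ((n : ℝ) - m + s - 1) * (1 - x) ^ ((m : ℝ) - s - 1))
      = ∑ k ∈ range n, x ^ ((k : ℝ) + s - 1) * (1 - x) ^ (1 - s - 1) := by
  have hx₁' : 0 < 1 - x := sub_pos.2 hx₁
  set c := x ^ (s - 1) * (1 - x) ^ (-s - 1)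
  have hleft : ∀ m ∈ Icc 1 n,
      (n.choose m : ℝ) * (x ^ ((n : ℝ) - m + s - 1) * (1 - x) ^ ((m : ℝ) - s - 1))
        = c * ((n.choose m : ℝ) * ((1 - x) ^ m * x ^ (n - m))) := fun m hm => by
    rw [show (n : ℝ) - m + s - 1 = s - 1 + (n - m : ℕ) by
        push_cast [Nat.cast_sub (mem_Icc.1 hm).2]; ring,
      show (m : ℝ) - s - 1 = -s - 1 + m by ring,
      rpow_add_natCast hx₀.ne', rpow_add_natCast hx₁'.ne']
    ring
  have hright : ∀ k ∈ range n, x ^ ((k : ℝ) + s - 1) * (1 - x) ^ (1 - s - 1)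
      = c * ((1 - x) * x ^ k) := fun k _ => by
    rw [show (k : ℝ) + s - 1 = s - 1 + k by ring, show (1 : ℝ) - s - 1 = -s - 1 + 1 by ring,
      rpow_add_natCast hx₀.ne', rpow_add_one hx₁'.ne']
    ring
  rw [sum_congr rfl hleft, sum_congr rfl hright, ← mul_sum, ← mul_sum, ← mul_sum,
    sum_Icc_choose_mul_one_sub_pow_mul_pow]

lemma sum_choose_mul_betaFn {s : ℝ} (hs₀ : 0 < s) (hs₁ : s < 1) (n : ℕ) :
    ∑ m ∈ Icc 1 n, (n.choose m : ℝ) * betaFn ((n : ℝ) - m + s) ((m : ℝ) - s)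
      = ∑ k ∈ range n, betaFn ((k : ℝ) + s) (1 - s) := by
  simp only [betaFn, ← intervalIntegral.integral_const_mul]
  rw [← intervalIntegral.integral_finsetSum, ← intervalIntegral.integral_finsetSum]
  · exact intervalIntegral.integral_congr_Ioo_of_le zero_le_one fun x hx =>
      sum_choose_mul_betaIntegrand hx.1 hx.2 s n
  · exact fun k _ => intervalIntegrable_betaIntegrand (by positivity) (by linarith)
  · intro m hm
    have hm' := mem_Icc.1 hm
    have : (m : ℝ) ≤ n := by exact_mod_cast hm'.2
    have : (1 : ℝ) ≤ m := by exact_mod_cast hm'.1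
    exact (intervalIntegrable_betaIntegrand (by linarith) (by linarith)).const_mul _

-- Mathlib puts `Gamma 0 = 0`, so both sides vanish at `n = 0`.
lemma sum_Gamma_add_div_Gamma_add_one {s : ℝ} (hs : 0 < s) (n : ℕ) :
    ∑ k ∈ range n, Gamma (k + s) / Gamma (k + 1) = Gamma (n + s) / (s * Gamma n) := by
  induction n with
  | zero => simp
  | succ n ih =>
    rw [sum_range_succ, ih, Nat.cast_succ, add_right_comm,
      Gamma_add_one (by positivity : (n : ℝ) + s ≠ 0)]
    rcases n.eq_zero_or_pos with rfl | hn
    · simp [hs.ne']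
    · have hn' : (n : ℝ) ≠ 0 := by positivity
      have hΓ := (Gamma_pos_of_pos (Nat.cast_pos.2 hn)).ne'
      rw [Gamma_add_one hn']
      field_simp

lemma sum_choose_mul_betaFn_eq_Gamma {s : ℝ} (hs₀ : 0 < s) (hs₁ : s < 1) (n : ℕ) :
    ∑ m ∈ Icc 1 n, (n.choose m : ℝ) * betaFn ((n : ℝ) - m + s) ((m : ℝ) - s)
      = Gamma (1 - s) * Gamma (n + s) / (s * Gamma n) := by
  rw [sum_choose_mul_betaFn hs₀ hs₁, mul_div_assoc, ← sum_Gamma_add_div_Gamma_add_one hs₀,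
    mul_sum]
  refine sum_congr rfl fun k _ => ?_
  rw [betaFn_eq_Gamma_mul_div (by positivity) (by linarith), add_add_sub_cancel]
  ring

lemma Gamma_mul_prod_add {s : ℝ} (hs : 0 < s) (n : ℕ) :
    Gamma s * ∏ j ∈ range n, (s + j) = Gamma (s + n) := by
  induction n with
  | zero => simp
  | succ n ih =>
    rw [prod_range_succ, ← mul_assoc, ih, Nat.cast_succ, ← add_assoc,
      Gamma_add_one (by positivity)]
    ring

lemma Gamma_add_div_Gamma_mul_rpow_eq {s : ℝ} (hs : 0 < s) {n : ℕ} (hn : n ≠ 0) :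
    Gamma (n + s) / (Gamma n * n ^ s) = n / (n + s) * (Gamma s / GammaSeq s n) := by
  have hn' : (0 : ℝ) < n := by positivity
  have hprod : Gamma s * ∏ j ∈ range (n + 1), (s + j) = (n + s) * Gamma (n + s) := by
    rw [Gamma_mul_prod_add hs, Nat.cast_succ, ← add_assoc, Gamma_add_one (by positivity),
      add_comm s]
  have hfact : (n.factorial : ℝ) = n * Gamma n := by
    rw [← Gamma_nat_eq_factorial, Gamma_add_one hn'.ne']
  have hΓ := (Gamma_pos_of_pos hn').ne'
  have hpow := (rpow_pos_of_pos hn' s).ne'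
  have hprod_ne := (prod_pos fun j (_ : j ∈ range (n + 1)) => (by positivity : 0 < s + j)).ne'
  rw [GammaSeq, hfact]
  field_simp
  linear_combination -hprod

lemma tendsto_Gamma_add_div_Gamma_mul_rpow {s : ℝ} (hs : 0 < s) :
    Tendsto (fun n : ℕ => Gamma (n + s) / (Gamma n * n ^ s)) atTop (𝓝 1) := by
  have h := (tendsto_natCast_div_add_atTop s).mul
    ((tendsto_const_nhds (x := Gamma s)).div (GammaSeq_tendsto_Gamma s) (Gamma_pos_of_pos hs).ne')
  rw [div_self (Gamma_pos_of_pos hs).ne', mul_one] at h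
  refine h.congr' ?_
  filter_upwards [eventually_ne_atTop 0] with n hn using
    (Gamma_add_div_Gamma_mul_rpow_eq hs hn).symm

lemma Cfun_eq {α : ℝ} (hα : 2 < α) (n : ℕ) :
    Cfun α n = π * Gamma (1 - 2 / α) * Gamma (n + 2 / α) / Gamma n := by
  have hα₀ : 0 < α := by linarith
  rw [Cfun, sum_choose_mul_betaFn_eq_Gamma (by positivity) ((div_lt_one hα₀).2 hα)]
  field_simp

/-- For `α > 2`, `C(α, M) / M^{2/α} → π Γ(1 − 2/α)` as `M → ∞` over positive integers. -/
theorem Cfun_asymptotics (α : ℝ) (hα : 2 < α) :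
    Tendsto (fun M : ℕ => Cfun α M / (M : ℝ) ^ (2 / α)) atTop
      (nhds (π * Real.Gamma (1 - 2 / α))) := by
  have h := (tendsto_Gamma_add_div_Gamma_mul_rpow (by positivity : 0 < 2 / α)).const_mul
    (π * Gamma (1 - 2 / α))
  rw [mul_one] at h
  refine h.congr fun n => ?_
  rw [Cfun_eq hα]
  ring
end
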